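/- Let p be an odd prime, let r be an integer with 0 ≤ r ≤ (p-1)/2, and let u, α ∈ F_p. Then in the polynomial ring F_p[x,y] one has the identity - Σ_{a ∈ F_p^×} ((α-u²)·a·x² - 2u·xy - a^{-1}·y²)^r = s_r(u,α) · x^r y^r. -/

import Mathlib

/-!
Write the summand as `a • c + b + a⁻¹ • d` with `c = (α - u²)x²`, `b = -2uxy`, `d = -y²`. Then its
`r`-th power is `a⁻ʳ G(a)` for `G(T) = (cT² + bT + d)ʳ`, a polynomial of degree `≤ 2r`. For
`n ≤ 2r` the character sum `Σ_{a ∈ F_p^×} a^(n - r)` is `-1` if `n = r` and `0` otherwise, because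
`|n - r| ≤ r < p - 1`; so the left side is the coefficient of `Tʳ` in `G`. Expanding
`(bT + (cT² + d))ʳ` binomially, that coefficient collects exactly the terms `bⁱ` with `r - i` even,
which is `s_r(u,α) xʳ yʳ`.
-/

open MvPolynomial

/-- `s_r(u,α) = (-1)^r · Σ_{i ∈ S_r} (-1)^{(r-i)/2} · C(r,i) · C(r-i,(r-i)/2)
· (α-u²)^{(r-i)/2} · (2u)^i` where `S_r` is the set of `0 ≤ i ≤ r` of the same parity as `r`. -/
def sCoef (p r : ℕ) (u α : ZMod p) : ZMod p :=
  (-1) ^ r * ∑ i ∈ (Finset.range (r + 1)).filter (fun i => i % 2 = r % 2),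
    (-1) ^ ((r - i) / 2) * (r.choose i : ZMod p) * ((r - i).choose ((r - i) / 2) : ZMod p) *
      (α - u ^ 2) ^ ((r - i) / 2) * (2 * u) ^ i

namespace Polynomial

variable {R : Type*} [CommRing R]

theorem coeff_C_mul_X_add_C_pow (c d : R) (n k : ℕ) :
    ((C c * X + C d) ^ n).coeff k = c ^ k * d ^ (n - k) * n.choose k := by
  have hterm : ∀ m, (C c * X) ^ m * C d ^ (n - m) * (n.choose m : R[X])
      = C (c ^ m * d ^ (n - m) * n.choose m) * X ^ m := by
    intro m
    simp only [map_mul, map_pow, map_natCast]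
    ring
  simp_rw [add_pow, finsetSum_coeff, hterm, coeff_C_mul_X_pow, Finset.sum_ite_eq,
    Finset.mem_range]
  split_ifs with hk
  · rfl
  · rw [Nat.choose_eq_zero_of_lt (by omega), Nat.cast_zero, mul_zero]

theorem coeff_C_mul_X_sq_add_C_pow (c d : R) (n k : ℕ) :
    ((C c * X ^ 2 + C d) ^ n).coeff k
      = if 2 ∣ k then c ^ (k / 2) * d ^ (n - k / 2) * n.choose (k / 2) else 0 := by
  have hexpand : C c * X ^ 2 + C d = expand R 2 (C c * X + C d) := by simp
  rw [hexpand, ← map_pow, coeff_expand two_pos, coeff_C_mul_X_add_C_pow]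

theorem coeff_quadratic_pow_self (b c d : R) (r : ℕ) :
    ((C c * X ^ 2 + C b * X + C d) ^ r).coeff r
      = ∑ i ∈ (Finset.range (r + 1)).filter (fun i => i % 2 = r % 2),
          r.choose i * (r - i).choose ((r - i) / 2) * (c * d) ^ ((r - i) / 2) * b ^ i := by
  have hterm : ∀ i ∈ Finset.range (r + 1),
      ((C b * X) ^ i * (C c * X ^ 2 + C d) ^ (r - i) * (r.choose i : R[X])).coeff r
        = if i % 2 = r % 2 then
            r.choose i * (r - i).choose ((r - i) / 2) * (c * d) ^ ((r - i) / 2) * b ^ i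
          else 0 := by
    intro i hi
    rw [Finset.mem_range] at hi
    rw [mul_pow, ← C_pow, ← C_eq_natCast, mul_comm _ (C _), ← mul_assoc, ← mul_assoc,
      ← map_mul, mul_assoc, coeff_C_mul, coeff_X_pow_mul', if_pos (by omega),
      coeff_C_mul_X_sq_add_C_pow]
    have hpar : 2 ∣ r - i ↔ i % 2 = r % 2 := by omega
    by_cases h : i % 2 = r % 2
    · rw [if_pos (hpar.2 h), if_pos h, show r - i - (r - i) / 2 = (r - i) / 2 by omega, mul_pow]
      ring
    · rw [if_neg (mt hpar.1 h), if_neg h, mul_zero]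
  rw [show C c * X ^ 2 + C b * X + C d = C b * X + (C c * X ^ 2 + C d) by ring, add_pow,
    finsetSum_coeff, Finset.sum_congr rfl hterm, Finset.sum_filter]

theorem pow_mul_eval_quadratic_pow_of_mul_eq_one {x y : R} (h : y * x = 1) (b c d : R) (r : ℕ) :
    y ^ r * ((C c * X ^ 2 + C b * X + C d) ^ r).eval x = (x * c + b + y * d) ^ r := by
  rw [eval_pow, ← mul_pow]
  congr 1
  simp only [eval_add, eval_mul, eval_C, eval_X, eval_pow]
  linear_combination (x * c + b) * h

end Polynomial

namespace FiniteField

variable {K : Type*} [Field K] [Fintype K] [DecidableEq K]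

theorem sum_units_zpow (n : ℤ) (hn : n.natAbs < Fintype.card K - 1) :
    ∑ a : Kˣ, ((a ^ n : Kˣ) : K) = if n = 0 then -1 else 0 := by
  have hsum : ∀ k : ℕ, k < Fintype.card K - 1 →
      ∑ a : Kˣ, (a : K) ^ k = if k = 0 then -1 else 0 := fun k hk => by
    rw [sum_pow_units]
    exact if_congr ⟨(Nat.eq_zero_of_dvd_of_lt · hk), (· ▸ dvd_zero _)⟩ rfl rfl
  obtain ⟨k, rfl | rfl⟩ := Int.eq_nat_or_neg n
  · simpa using hsum k (by simpa using hn)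
  · rw [← Fintype.sum_equiv (Equiv.inv Kˣ) (fun a => ((a ^ k : Kˣ) : K)) _ fun a => by simp]
    simpa using hsum k (by simpa using hn)

variable {R : Type*} [CommRing R] [Algebra K R]

theorem sum_units_inv_pow_mul_eval (G : Polynomial R) {r : ℕ} (hG : G.natDegree ≤ 2 * r)
    (hr : r < Fintype.card K - 1) :
    ∑ a : Kˣ, algebraMap K R (((a⁻¹ : Kˣ) : K) ^ r) * G.eval (algebraMap K R a)
      = -G.coeff r := by
  have hmonomial : ∀ n ∈ Finset.range (2 * r + 1),
      ∑ a : Kˣ, algebraMap K R (((a⁻¹ : Kˣ) : K) ^ r) * (G.coeff n * algebraMap K R a ^ n)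
        = if n = r then -G.coeff n else 0 := by
    intro n hn
    rw [Finset.mem_range] at hn
    have hzpow : ∀ a : Kˣ, ((a⁻¹ : Kˣ) : K) ^ r * (a : K) ^ n = ((a ^ ((n : ℤ) - r) : Kˣ) : K) := by
      intro a
      rw [zpow_sub, zpow_natCast, zpow_natCast, mul_comm, Units.val_mul, ← inv_pow,
        Units.val_pow_eq_pow_val, Units.val_pow_eq_pow_val]
    simp_rw [mul_left_comm _ (G.coeff n), ← map_pow, ← map_mul, ← Finset.mul_sum, ← map_sum,
      hzpow]
    rw [sum_units_zpow _ (by omega)]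
    split_ifs <;> first | omega | simp
  simp_rw [G.eval_eq_sum_range' (Nat.lt_succ_of_le hG), Finset.mul_sum]
  rw [Finset.sum_comm, Finset.sum_congr rfl hmonomial, Finset.sum_ite_eq',
    if_pos (Finset.mem_range.2 (by omega))]

theorem sum_units_smul_add_add_inv_smul_pow (b c d : R) {r : ℕ} (hr : r < Fintype.card K - 1) :
    ∑ a : Kˣ, ((a : K) • c + b + ((a⁻¹ : Kˣ) : K) • d) ^ r
      = -∑ i ∈ (Finset.range (r + 1)).filter (fun i => i % 2 = r % 2),
          r.choose i * (r - i).choose ((r - i) / 2) * (c * d) ^ ((r - i) / 2) * b ^ i := by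
  have hlaurent : ∀ a : Kˣ, ((a : K) • c + b + ((a⁻¹ : Kˣ) : K) • d) ^ r
      = algebraMap K R (((a⁻¹ : Kˣ) : K) ^ r) * ((Polynomial.C c * Polynomial.X ^ 2
          + Polynomial.C b * Polynomial.X + Polynomial.C d) ^ r).eval (algebraMap K R a) := by
    intro a
    rw [map_pow, Polynomial.pow_mul_eval_quadratic_pow_of_mul_eq_one
      (by rw [← map_mul, Units.inv_mul, map_one]), Algebra.smul_def, Algebra.smul_def]
  rw [Finset.sum_congr rfl fun a _ => hlaurent a, sum_units_inv_pow_mul_eval _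
    ((Polynomial.natDegree_pow_le_of_le r Polynomial.natDegree_quadratic_le).trans_eq
      (mul_comm _ _)) hr, Polynomial.coeff_quadratic_pow_self]

end FiniteField

theorem sum_eq_sCoef_general (p : ℕ) [Fact p.Prime]
    (r : ℕ) (hr : r ≤ (p - 1) / 2) (u α : ZMod p) :
    - ∑ a : (ZMod p)ˣ,
        (C ((α - u ^ 2) * (a : ZMod p)) * (X 0 : MvPolynomial (Fin 2) (ZMod p)) ^ 2
          - C (2 * u) * X 0 * X 1
          - C (((a⁻¹ : (ZMod p)ˣ) : ZMod p)) * X 1 ^ 2) ^ r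
      = C (sCoef p r u α) * X 0 ^ r * X 1 ^ r := by
  have hp := (Fact.out : p.Prime).two_le
  have hsummand : ∀ a : (ZMod p)ˣ,
      C ((α - u ^ 2) * (a : ZMod p)) * (X 0 : MvPolynomial (Fin 2) (ZMod p)) ^ 2
          - C (2 * u) * X 0 * X 1 - C (((a⁻¹ : (ZMod p)ˣ) : ZMod p)) * X 1 ^ 2
        = (a : ZMod p) • (C (α - u ^ 2) * X 0 ^ 2) + -(C (2 * u) * X 0 * X 1)
          + ((a⁻¹ : (ZMod p)ˣ) : ZMod p) • -X 1 ^ 2 := fun a => by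
    simp only [smul_eq_C_mul, map_mul]
    ring
  simp_rw [hsummand]
  rw [FiniteField.sum_units_smul_add_add_inv_smul_pow _ _ _ (by rw [ZMod.card]; omega), neg_neg,
    sCoef, map_mul C ((-1 : ZMod p) ^ r), map_sum, Finset.mul_sum, Finset.sum_mul, Finset.sum_mul]
  refine Finset.sum_congr rfl fun i hi => ?_
  obtain ⟨hi, hpar⟩ : i < r + 1 ∧ i % 2 = r % 2 := by simpa using hi
  obtain ⟨k, hk⟩ : ∃ k, r - i = 2 * k := ⟨(r - i) / 2, by omega⟩
  rw [hk, Nat.mul_div_cancel_left k two_pos, show r = 2 * k + i by omega]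
  simp only [map_mul, map_pow, map_neg, map_one, map_natCast, pow_add, pow_mul, neg_one_sq,
    one_pow]
  ring

/-- For an odd prime `p`, `0 ≤ r ≤ (p-1)/2` and `u, α ∈ F_p`, in `F_p[x,y]` one has
`- Σ_{a ∈ F_p^×} ((α-u²)·a·x² - 2u·xy - a⁻¹·y²)^r = s_r(u,α) · x^r y^r`. -/
theorem sum_eq_sCoef (p : ℕ) [Fact p.Prime] (hodd : Odd p)
    (r : ℕ) (hr : r ≤ (p - 1) / 2) (u α : ZMod p) :
    - ∑ a : (ZMod p)ˣ,
        (C ((α - u ^ 2) * (a : ZMod p)) * (X 0 : MvPolynomial (Fin 2) (ZMod p)) ^ 2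
          - C (2 * u) * X 0 * X 1
          - C (((a⁻¹ : (ZMod p)ˣ) : ZMod p)) * X 1 ^ 2) ^ r
      = C (sCoef p r u α) * X 0 ^ r * X 1 ^ r :=
  sum_eq_sCoef_general p r hr u α
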